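/- arXiv:math/9901080 — 2 statements merged into one kernel-verified Lean document; each statement's English description precedes it below -/
import Mathlib

section
/- If q is not a root of unity and s ≠ ±i q^{m+1/2} for all integers m, then the eigenvalues i(sq^m - s^{-1}q^{-m})/(q-q^{-1}) of R_{rs}(I), for m ∈ Z, are pairwise distinct. -/
noncomputable section

/-- The basis vector |m⟩, m ∈ ℤ. -/
def e (m : ℤ) : ℤ →₀ ℂ := Finsupp.single m 1

/-- A linear operator on the space with basis {|m⟩ : m ∈ ℤ}, given by its values on
the basis vectors. -/
def op (f : ℤ → (ℤ →₀ ℂ)) : (ℤ →₀ ℂ) →ₗ[ℂ] (ℤ →₀ ℂ) :=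
  Finsupp.lift _ _ _ f

variable (q sq r s : ℂ)

/-- R(I)|m⟩ = i((sqᵐ - s⁻¹q⁻ᵐ)/(q-q⁻¹))|m⟩. -/
def RI : (ℤ →₀ ℂ) →ₗ[ℂ] (ℤ →₀ ℂ) :=
  op fun m => (Complex.I * (s * q ^ m - s⁻¹ * q ^ (-m)) / (q - q⁻¹)) • e m

/-- R(T2)|m⟩ = (r/(sqᵐ + s⁻¹q⁻ᵐ))(|m+1⟩ + |m-1⟩). -/
def RT2 : (ℤ →₀ ℂ) →ₗ[ℂ] (ℤ →₀ ℂ) :=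
  op fun m => (r / (s * q ^ m + s⁻¹ * q ^ (-m))) • (e (m + 1) + e (m - 1))

/-- R(T1)|m⟩ = (i q^{1/2} r/(sqᵐ + s⁻¹q⁻ᵐ))(sqᵐ|m+1⟩ - s⁻¹q⁻ᵐ|m-1⟩),
where sq = q^{1/2}. -/
def RT1 : (ℤ →₀ ℂ) →ₗ[ℂ] (ℤ →₀ ℂ) :=
  op fun m => (Complex.I * sq * r / (s * q ^ m + s⁻¹ * q ^ (-m))) •
    ((s * q ^ m) • e (m + 1) - (s⁻¹ * q ^ (-m)) • e (m - 1))

end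

/-! The numerators of two eigenvalues differ by `(qᵐ - qⁿ)(s²q^(m+n) + 1)/(sq^(m+n))`.
The first factor vanishes only for `m = n` since `q` is not a root of unity; the second would
force `s² = -qᵏ`, i.e. `s = ±i qʲ` when `k = 2j` and `s = ±i qʲ q^(1/2)` when `k = 2j + 1`. -/

theorem zpow_injective_of_pow_ne_one {G₀ : Type*} [GroupWithZero G₀] {q : G₀} (hq : q ≠ 0)
    (hroot : ∀ n : ℕ, n ≠ 0 → q ^ n ≠ 1) : Function.Injective fun n : ℤ => q ^ n := by
  have hu : ¬IsOfFinOrder (Units.mk0 q hq) := by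
    rw [isOfFinOrder_iff_pow_eq_one]
    rintro ⟨n, hn, hqn⟩
    exact hroot n hn.ne' (by simpa [Units.ext_iff] using hqn)
  intro m n hmn
  exact injective_zpow_iff_not_isOfFinOrder.mpr hu (Units.ext (by simpa using hmn))

theorem sub_inv_ne_zero_of_sq_ne_one {K : Type*} [Field K] {q : K} (hq : q ≠ 0)
    (hq2 : q ^ 2 ≠ 1) : q - q⁻¹ ≠ 0 := by
  refine sub_ne_zero.mpr fun h => hq2 ?_
  rw [sq]
  nth_rewrite 2 [h]
  exact mul_inv_cancel₀ hq

theorem sub_sub_sub_eq_mul_div {K : Type*} [Field K] {q s : K} (hq : q ≠ 0) (hs : s ≠ 0)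
    (m n : ℤ) :
    (s * q ^ m - s⁻¹ * q ^ (-m)) - (s * q ^ n - s⁻¹ * q ^ (-n)) =
      (q ^ m - q ^ n) * (s ^ 2 * q ^ (m + n) + 1) / (s * q ^ (m + n)) := by
  have hm : q ^ m ≠ 0 := zpow_ne_zero m hq
  have hn : q ^ n ≠ 0 := zpow_ne_zero n hq
  rw [zpow_neg, zpow_neg, zpow_add₀ hq]
  field_simp
  ring

theorem injective_mul_zpow_sub_inv_mul_zpow_neg {K : Type*} [Field K] {q s : K} (hq : q ≠ 0)
    (hroot : ∀ n : ℕ, n ≠ 0 → q ^ n ≠ 1) (hs : s ≠ 0) (hsk : ∀ k : ℤ, s ^ 2 * q ^ k ≠ -1) :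
    Function.Injective fun m : ℤ => s * q ^ m - s⁻¹ * q ^ (-m) := by
  intro m n hmn
  have h := sub_sub_sub_eq_mul_div hq hs m n
  rw [sub_eq_zero.mpr hmn, eq_comm, div_eq_zero_iff, mul_eq_zero] at h
  rcases h with (h | h) | h
  · exact zpow_injective_of_pow_ne_one hq hroot (sub_eq_zero.mp h)
  · exact absurd (eq_neg_of_add_eq_zero_left h) (hsk _)
  · exact absurd h (mul_ne_zero hs (zpow_ne_zero _ hq))

theorem eq_I_mul_or_eq_neg_I_mul_of_sq_eq_neg_sq {s t : ℂ} (h : s ^ 2 = -t ^ 2) :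
    s = Complex.I * t ∨ s = -(Complex.I * t) := by
  rw [← sq_eq_sq_iff_eq_or_eq_neg, h, mul_pow, Complex.I_sq, neg_one_mul]

theorem sq_mul_zpow_ne_neg_one {q sq s : ℂ} (hq : q ≠ 0) (hsq : sq ^ 2 = q)
    (hsi : ∀ n : ℤ, s ≠ Complex.I * q ^ n ∧ s ≠ -(Complex.I * q ^ n))
    (hsi2 : ∀ n : ℤ, s ≠ Complex.I * q ^ n * sq ∧ s ≠ -(Complex.I * q ^ n * sq)) (k : ℤ) :
    s ^ 2 * q ^ k ≠ -1 := by
  intro h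
  have hs2 : s ^ 2 = -q ^ (-k) := by
    rw [zpow_neg, ← one_div, ← neg_div, eq_div_iff (zpow_ne_zero k hq)]
    exact h
  obtain ⟨j, hk | hk⟩ := Int.even_or_odd' (-k)
  · have hsquare : q ^ (-k) = (q ^ j) ^ 2 := by
      rw [hk, ← zpow_natCast, ← zpow_mul, mul_comm j]
      rfl
    rw [hsquare] at hs2
    rcases eq_I_mul_or_eq_neg_I_mul_of_sq_eq_neg_sq hs2 with h' | h'
    exacts [(hsi j).1 h', (hsi j).2 h']
  · have hsquare : q ^ (-k) = (q ^ j * sq) ^ 2 := by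
      rw [hk, mul_pow, hsq, zpow_add_one₀ hq, ← zpow_natCast, ← zpow_mul, mul_comm j]
      rfl
    rw [hsquare] at hs2
    rcases eq_I_mul_or_eq_neg_I_mul_of_sq_eq_neg_sq hs2 with h' | h'
    · exact (hsi2 j).1 (by rw [h', mul_assoc])
    · exact (hsi2 j).2 (by rw [h', mul_assoc])

/-- If q is not a root of unity and s ≠ ±i q^{m+1/2} for all integers m,
then the eigenvalues i(sqᵐ - s⁻¹q⁻ᵐ)/(q-q⁻¹) of R_{rs}(I), m ∈ ℤ, are pairwise
distinct. (The conditions s ≠ 0 and s ≠ ±i qⁿ are those required for R_{rs} to be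
defined.) -/
theorem stmt8 (q sq s : ℂ) (hq : q ≠ 0) (hsq : sq ^ 2 = q)
    (hroot : ∀ n : ℕ, n ≠ 0 → q ^ n ≠ 1) (hs : s ≠ 0)
    (hsi : ∀ n : ℤ, s ≠ Complex.I * q ^ n ∧ s ≠ -(Complex.I * q ^ n))
    (hsi2 : ∀ n : ℤ, s ≠ Complex.I * q ^ n * sq ∧ s ≠ -(Complex.I * q ^ n * sq)) :
    ∀ m n : ℤ, m ≠ n →
      Complex.I * (s * q ^ m - s⁻¹ * q ^ (-m)) / (q - q⁻¹) ≠
      Complex.I * (s * q ^ n - s⁻¹ * q ^ (-n)) / (q - q⁻¹) := by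
  have hinj := injective_mul_zpow_sub_inv_mul_zpow_neg hq hroot hs
    (sq_mul_zpow_ne_neg_one hq hsq hsi hsi2)
  have hqq : q - q⁻¹ ≠ 0 := sub_inv_ne_zero_of_sq_ne_one hq (hroot 2 two_ne_zero)
  intro m n hmn heq
  rw [div_left_inj' hqq] at heq
  exact hmn (hinj (mul_left_cancel₀ Complex.I_ne_zero heq))
end

section
/- For s = ε i q^{m+1/2} with ε ∈ {1,-1} and m ∈ Z, the subspaces V_{+1} and V_{-1} spanned by the vectors |j⟩_ε̃ := |-m+j⟩ + ε̃ i (-1)^j |-m-j-1⟩, j = 0,1,2,..., (for ε̃ = 1 and ε̃ = -1 respectively) are invariant under the operators R_{rs}(I), R_{rs}(T1), and R_{rs}(T2); hence R_{rs} is reducible. -/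
/-- The vector |j⟩_ε̃ := |-m+j⟩ + ε̃ i (-1)ʲ |-m-j-1⟩, j = 0,1,2,…. -/
noncomputable def vv (m : ℤ) (te : ℂ) (j : ℕ) : ℤ →₀ ℂ :=
  e (-m + j) + (te * Complex.I * (-1) ^ j) • e (-m - j - 1)

/-- The subspace V_ε̃ spanned by the vectors |j⟩_ε̃, j ≥ 0. -/
noncomputable def Vsub (m : ℤ) (te : ℂ) : Submodule ℂ (ℤ →₀ ℂ) :=
  Submodule.span ℂ (Set.range (vv m te))

lemma op_e (f : ℤ → (ℤ →₀ ℂ)) (n : ℤ) : op f (e n) = f n := by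
  rw [op, Finsupp.lift_apply, e]
  exact (Finsupp.sum_single_index (by simp)).trans (one_smul ℂ (f n))

lemma linearMap_ext_e {f g : (ℤ →₀ ℂ) →ₗ[ℂ] (ℤ →₀ ℂ)} (h : ∀ n, f (e n) = g (e n)) : f = g :=
  Finsupp.basisSingleOne.ext h

lemma Commute.apply_mem_range {R M : Type*} [Semiring R] [AddCommMonoid M] [Module R M]
    {A T : Module.End R M} (h : Commute A T) {x : M} (hx : x ∈ LinearMap.range A) :
    T x ∈ LinearMap.range A := by
  obtain ⟨y, rfl⟩ := hx
  exact ⟨T y, congr($(h.eq) y)⟩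

noncomputable def twistedReflection (c : ℤ) (κ : ℂ) : (ℤ →₀ ℂ) →ₗ[ℂ] (ℤ →₀ ℂ) :=
  op fun n => (κ * (-1) ^ n) • e (c - n)

section twistedReflection

variable {c : ℤ} {κ : ℂ}

lemma twistedReflection_e (n : ℤ) :
    twistedReflection c κ (e n) = (κ * (-1) ^ n) • e (c - n) :=
  op_e _ n

lemma twistedReflection_mul_self (h : κ ^ 2 * (-1) ^ c = 1) :
    twistedReflection c κ * twistedReflection c κ = 1 := by
  refine linearMap_ext_e fun n => ?_
  rw [Module.End.mul_apply, twistedReflection_e, map_smul, twistedReflection_e, sub_sub_cancel,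
    smul_smul, Module.End.one_apply]
  convert one_smul ℂ (e n)
  calc κ * (-1) ^ n * (κ * (-1) ^ (c - n)) = κ ^ 2 * ((-1) ^ (c - n) * (-1) ^ n) := by ring
    _ = 1 := by rw [← zpow_add₀ (by norm_num), sub_add_cancel, h]

lemma twistedReflection_e_ne_self (hc : Odd c) (n : ℤ) : twistedReflection c κ (e n) ≠ e n := by
  intro h
  have hn : c - n ≠ n := by intro hcn; obtain ⟨k, rfl⟩ := hc; omega
  have := congr($h n)
  rw [twistedReflection_e] at this
  simp [e, hn] at this

end twistedReflection

section reflectionSymmetry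

variable {c : ℤ} {q s : ℂ}

lemma mul_zpow_reflect (hq : q ≠ 0) (hsc : s * q ^ c = -s⁻¹) (n : ℤ) :
    s * q ^ (c - n) = -(s⁻¹ * q ^ (-n)) := by
  rw [zpow_sub₀ hq, ← mul_div_assoc, hsc, zpow_neg, div_eq_mul_inv, neg_mul]

lemma inv_mul_zpow_reflect (hq : q ≠ 0) (hsc : s * q ^ c = -s⁻¹) (n : ℤ) :
    s⁻¹ * q ^ (-(c - n)) = -(s * q ^ n) := by
  have hsc' : s⁻¹ * q ^ (-c) = -s := by rw [zpow_neg, ← mul_inv, hsc, inv_neg, inv_inv]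
  calc s⁻¹ * q ^ (-(c - n)) = s⁻¹ * q ^ (-c) * q ^ n := by
        rw [neg_sub, sub_eq_neg_add, zpow_add₀ hq, mul_assoc]
    _ = -(s * q ^ n) := by rw [hsc', neg_mul]

lemma denom_reflect (hq : q ≠ 0) (hsc : s * q ^ c = -s⁻¹) (n : ℤ) :
    s * q ^ (c - n) + s⁻¹ * q ^ (-(c - n)) = -(s * q ^ n + s⁻¹ * q ^ (-n)) := by
  rw [mul_zpow_reflect hq hsc, inv_mul_zpow_reflect hq hsc]
  ring

variable (κ : ℂ)

lemma commute_twistedReflection_RI (hq : q ≠ 0) (hsc : s * q ^ c = -s⁻¹) :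
    Commute (twistedReflection c κ) (RI q s) := by
  refine linearMap_ext_e fun n => ?_
  simp only [Module.End.mul_apply, RI, op_e, map_smul, twistedReflection_e,
    mul_zpow_reflect hq hsc, inv_mul_zpow_reflect hq hsc]
  module

lemma commute_twistedReflection_RT2 (r : ℂ) (hq : q ≠ 0) (hsc : s * q ^ c = -s⁻¹) :
    Commute (twistedReflection c κ) (RT2 q r s) := by
  refine linearMap_ext_e fun n => ?_
  simp only [Module.End.mul_apply, RT2, op_e, map_smul, map_add, twistedReflection_e]
  rw [denom_reflect hq hsc, div_neg,
    show c - (n + 1) = c - n - 1 by ring, show c - (n - 1) = c - n + 1 by ring,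
    zpow_add_one₀ (by norm_num), zpow_sub_one₀ (by norm_num)]
  module

lemma commute_twistedReflection_RT1 (sq r : ℂ) (hq : q ≠ 0) (hsc : s * q ^ c = -s⁻¹) :
    Commute (twistedReflection c κ) (RT1 q sq r s) := by
  refine linearMap_ext_e fun n => ?_
  simp only [Module.End.mul_apply, RT1, op_e, map_smul, map_sub, twistedReflection_e]
  rw [denom_reflect hq hsc, div_neg, mul_zpow_reflect hq hsc, inv_mul_zpow_reflect hq hsc,
    show c - (n + 1) = c - n - 1 by ring, show c - (n - 1) = c - n + 1 by ring,
    zpow_add_one₀ (by norm_num), zpow_sub_one₀ (by norm_num)]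
  module

end reflectionSymmetry

section involution

variable {R M : Type*} [Semiring R] [AddCommMonoid M] [Module R M] {P : Module.End R M}

lemma one_add_mul_of_mul_self_eq_one (h : P * P = 1) : (1 + P) * P = 1 + P := by
  rw [add_mul, one_mul, h, add_comm]

lemma apply_eq_self_of_mem_range_one_add (h : P * P = 1) {x : M}
    (hx : x ∈ LinearMap.range (1 + P)) : P x = x := by
  obtain ⟨y, rfl⟩ := hx
  rw [← Module.End.mul_apply, mul_add, mul_one, h, add_comm]

end involution

noncomputable def Vreflection (m : ℤ) (te : ℂ) : (ℤ →₀ ℂ) →ₗ[ℂ] (ℤ →₀ ℂ) :=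
  twistedReflection (-2 * m - 1) (te * Complex.I * (-1) ^ m)

section Vreflection

variable {m : ℤ} {te : ℂ}

lemma Vreflection_mul_self (hte : te ^ 2 = 1) : Vreflection m te * Vreflection m te = 1 := by
  refine twistedReflection_mul_self ?_
  have hsign : ((-1 : ℂ) ^ m) ^ 2 * (-1) ^ (-2 * m - 1) = -1 := by
    rw [← zpow_natCast, ← zpow_mul, ← zpow_add₀ (by norm_num),
      show m * (2 : ℕ) + (-2 * m - 1) = -1 by push_cast; ring]
    norm_num
  linear_combination (Complex.I ^ 2 * ((-1 : ℂ) ^ m) ^ 2 * (-1) ^ (-2 * m - 1)) * hte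
    + ((-1 : ℂ) ^ m) ^ 2 * (-1) ^ (-2 * m - 1) * Complex.I_sq - hsign

lemma vv_eq_one_add_Vreflection (j : ℕ) : vv m te j = (1 + Vreflection m te) (e (-m + j)) := by
  rw [LinearMap.add_apply, Module.End.one_apply, Vreflection, twistedReflection_e, vv,
    show -2 * m - 1 - (-m + j) = -m - j - 1 by ring, mul_assoc (te * Complex.I),
    ← zpow_add₀ (by norm_num), add_neg_cancel_left, zpow_natCast]

lemma one_add_Vreflection_e_mem (hte : te ^ 2 = 1) (n : ℤ) :
    (1 + Vreflection m te) (e n) ∈ Vsub m te := by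
  have hgen : ∀ n, -m ≤ n → (1 + Vreflection m te) (e n) ∈ Vsub m te := fun n hn => by
    obtain ⟨j, rfl⟩ : ∃ j : ℕ, n = -m + j := ⟨(n + m).toNat, by omega⟩
    rw [← vv_eq_one_add_Vreflection]
    exact Submodule.subset_span ⟨j, rfl⟩
  rcases le_or_gt (-m) n with hn | hn
  · exact hgen n hn
  · rw [← one_add_mul_of_mul_self_eq_one (Vreflection_mul_self hte), Module.End.mul_apply,
      Vreflection, twistedReflection_e, map_smul]
    exact Submodule.smul_mem _ _ (hgen _ (by omega))

lemma Vsub_eq_range (hte : te ^ 2 = 1) : Vsub m te = LinearMap.range (1 + Vreflection m te) := by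
  apply le_antisymm
  · rw [Vsub, Submodule.span_le]
    rintro _ ⟨j, rfl⟩
    rw [vv_eq_one_add_Vreflection]
    exact LinearMap.mem_range_self _ _
  · rw [LinearMap.range_eq_map, ← Finsupp.basisSingleOne.span_eq, Submodule.map_span,
      Submodule.span_le]
    rintro _ ⟨_, ⟨n, rfl⟩, rfl⟩
    exact one_add_Vreflection_e_mem hte n

end Vreflection

lemma mul_zpow_neg_two_mul_sub_one_eq_neg_inv {q sq ε : ℂ} (hq : q ≠ 0) (hsq : sq ^ 2 = q)
    (hε : ε ^ 2 = 1) (m : ℤ) :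
    ε * Complex.I * q ^ m * sq * q ^ (-2 * m - 1) = -(ε * Complex.I * q ^ m * sq)⁻¹ := by
  have hsq0 : sq ≠ 0 := by rintro rfl; exact hq (by simpa using hsq.symm)
  have hε0 : ε ≠ 0 := by rintro rfl; norm_num at hε
  rw [show -2 * m - 1 = -(m + m + 1) by ring, zpow_neg, zpow_add₀ hq, zpow_add₀ hq, zpow_one]
  field_simp
  linear_combination Complex.I ^ 2 * sq ^ 2 * hε + sq ^ 2 * Complex.I_sq - hsq

theorem stmt11_general (q sq r ε : ℂ) (hq : q ≠ 0) (hsq : sq ^ 2 = q)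
    (hε : ε = 1 ∨ ε = -1) (m : ℤ)
    (s : ℂ) (hs : s = ε * Complex.I * q ^ m * sq) :
    (∀ te : ℂ, (te = 1 ∨ te = -1) → ∀ x ∈ Vsub m te,
        RI q s x ∈ Vsub m te ∧ RT1 q sq r s x ∈ Vsub m te ∧ RT2 q r s x ∈ Vsub m te) ∧
    Vsub m 1 ≠ ⊥ ∧ Vsub m 1 ≠ ⊤ := by
  have hsc : s * q ^ (-2 * m - 1) = -s⁻¹ := hs ▸
    mul_zpow_neg_two_mul_sub_one_eq_neg_inv hq hsq (by rcases hε with rfl | rfl <;> norm_num) m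
  refine ⟨fun te hte x hx => ?_, ?_, ?_⟩
  · have hte2 : te ^ 2 = 1 := by rcases hte with rfl | rfl <;> norm_num
    rw [Vsub_eq_range hte2] at hx ⊢
    have hinv : ∀ T, Commute (Vreflection m te) T → T x ∈ LinearMap.range (1 + Vreflection m te) :=
      fun T hT => ((Commute.one_left T).add_left hT).apply_mem_range hx
    exact ⟨hinv _ (commute_twistedReflection_RI _ hq hsc),
      hinv _ (commute_twistedReflection_RT1 _ sq r hq hsc),
      hinv _ (commute_twistedReflection_RT2 _ r hq hsc)⟩
  · rw [Submodule.ne_bot_iff]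
    refine ⟨vv m 1 0, Submodule.subset_span ⟨0, rfl⟩, fun h => ?_⟩
    simpa [vv, e, Finsupp.single_apply] using congr($h (-m))
  · intro htop
    have hone : (1 : ℂ) ^ 2 = 1 := one_pow 2
    have he : e 0 ∈ LinearMap.range (1 + Vreflection m 1) :=
      Vsub_eq_range hone ▸ htop ▸ Submodule.mem_top
    exact twistedReflection_e_ne_self ⟨-m - 1, by ring⟩ 0
      (apply_eq_self_of_mem_range_one_add (Vreflection_mul_self hone) he)

/-- For s = ε i q^{m+1/2} (ε = ±1, m ∈ ℤ), the subspaces V_{+1} and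
V_{-1} are invariant under R_{rs}(I), R_{rs}(T1), R_{rs}(T2); hence R_{rs} is
reducible. -/
theorem stmt11 (q sq r ε : ℂ) (hq : q ≠ 0) (hsq : sq ^ 2 = q)
    (hroot : ∀ n : ℕ, n ≠ 0 → q ^ n ≠ 1)
    (hr : r ≠ 0) (hε : ε = 1 ∨ ε = -1) (m : ℤ)
    (s : ℂ) (hs : s = ε * Complex.I * q ^ m * sq) :
    (∀ te : ℂ, (te = 1 ∨ te = -1) → ∀ x ∈ Vsub m te,
        RI q s x ∈ Vsub m te ∧ RT1 q sq r s x ∈ Vsub m te ∧ RT2 q r s x ∈ Vsub m te) ∧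
    Vsub m 1 ≠ ⊥ ∧ Vsub m 1 ≠ ⊤ :=
  stmt11_general q sq r ε hq hsq hε m s hs
end
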